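/- If a binary word f has a 2-tilde-error overlap of type SS with adjacent error positions and blocks 1001 aligned against 0110 (i.e., f = w2·1001·w3·w4 = w1·w2·0110·w3 with |w1| = r), then the words α̃ = w1·w2·0101·w3·w4 and β̃ = w1·w2·1010·w3·w4 are both f-free, dist~(α̃, β̃) = 2, and every minimal tilde-transformation from α̃ to β̃ has an intermediate word containing f; hence (α̃, β̃) is a pair of tilde-witnesses for f. -/

import Mathlib

/-- Edit operations on binary words: `R i` flips the bit at position `i`,
`S i` swaps the (distinct) bits at positions `i` and `i+1`. Positions are 0-based. -/
inductive TOp where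
  | R (i : ℕ)
  | S (i : ℕ)
deriving DecidableEq

namespace TOp

def apply : TOp → List Bool → List Bool
  | R i, w => w.set i (!(w.getD i false))
  | S i, w => (w.set i (w.getD (i+1) false)).set (i+1) (w.getD i false)

def valid : TOp → List Bool → Prop
  | R i, w => i < w.length
  | S i, w => i + 1 < w.length ∧ w.getD i false ≠ w.getD (i+1) false

/-- The set of positions modified by an operation. -/
def positions : TOp → Finset ℕ
  | R i => {i}
  | S i => {i, i+1}

/-- The (leftmost) position of an operation. -/
def pos : TOp → ℕ
  | R i => i
  | S i => i

def isR : TOp → Prop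
  | R _ => True
  | S _ => False

def isS : TOp → Prop
  | R _ => False
  | S _ => True

end TOp

/-- All operations of a sequence are valid when applied successively starting from `w`. -/
def validSeq : List TOp → List Bool → Prop
  | [], _ => True
  | o :: os, w => o.valid w ∧ validSeq os (o.apply w)

def applySeq : List TOp → List Bool → List Bool
  | [], w => w
  | o :: os, w => applySeq os (o.apply w)

/-- `ops` is a tilde-transformation from `u` to `v`. -/
def Transforms (ops : List TOp) (u v : List Bool) : Prop :=
  validSeq ops u ∧ applySeq ops u = v

/-- The swap-mismatch (tilde) distance between two words. -/
noncomputable def tdist (u v : List Bool) : ℕ :=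
  sInf { n | ∃ ops : List TOp, ops.length = n ∧ Transforms ops u v }

/-- Each position of the word is modified at most once along the sequence. -/
def eachPosOnce (ops : List TOp) : Prop :=
  ops.Pairwise fun o o' => Disjoint o.positions o'.positions

/-- A minimal tilde-transformation: length `tdist u v`, each position changed at most once. -/
def MinimalTransf (ops : List TOp) (u v : List Bool) : Prop :=
  Transforms ops u v ∧ ops.length = tdist u v ∧ eachPosOnce ops

/-- The list of all words `w_0 = u, w_1, …, w_h` visited by the transformation. -/
def trajectory (ops : List TOp) (u : List Bool) : List (List Bool) :=
  List.scanl (fun w o => o.apply w) u ops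

/-- `w` avoids `f` as a factor. -/
def FFree (f w : List Bool) : Prop := ¬ f <:+: w

/-- All words along the transformation are `f`-free. -/
def FreeTransf (f : List Bool) (ops : List TOp) (u : List Bool) : Prop :=
  ∀ w ∈ trajectory ops u, FFree f w

/-- `f` is tilde-isometric. -/
def TildeIsometric (f : List Bool) : Prop :=
  ∀ u v : List Bool, u.length = v.length → f.length < u.length →
    FFree f u → FFree f v →
      ∃ ops : List TOp, MinimalTransf ops u v ∧ FreeTransf f ops u

/-- `(u,v)` is a pair of tilde-witnesses for `f`. -/
def Witnesses (f u v : List Bool) : Prop :=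
  u.length = v.length ∧ FFree f u ∧ FFree f v ∧ 2 ≤ tdist u v ∧
    ∀ ops : List TOp, MinimalTransf ops u v → ¬ FreeTransf f ops u

/-- Hamming distance between equal-length words (number of mismatch positions). -/
def hdist (u v : List Bool) : ℕ := ((u.zip v).filter fun p => p.1 != p.2).length

/-!
Let `L = |w1 w2|` and `r = |w1|`. The words `α̃ = w1 w2 0101 w3 w4` and `β̃ = w1 w2 1010 w3 w4`
differ exactly on the block `[L, L + 4)`. A valid operation changes every position it touches
and touches at most two adjacent ones, so `dist~(α̃, β̃) = 2`, realised by the swaps at `L` and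
`L + 2`; these are the only minimal transformations, and whichever swap comes first produces
`w1 w2 1001 w3 w4 = w1 f` or `w1 w2 0110 w3 w4 = f w4`.

The two factorisations of `f` say that `f` agrees with its shift by `r` except on four
positions. An occurrence of `f` in `α̃` or `β̃` starts at some `t ≤ r`; comparing it with `f`
and with the shifted copy of `f` transports the centre blocks to positions where they
contradict each other.
-/

namespace List

variable {α : Type*}

theorem getD_set_of_ne (l : List α) {i j : ℕ} (h : i ≠ j) (a d : α) :
    (l.set i a).getD j d = l.getD j d := by
  simp [getD_eq_getElem?_getD, getElem?_set_ne h]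

theorem getD_set_self (l : List α) {i : ℕ} (h : i < l.length) (a d : α) :
    (l.set i a).getD i d = a := by
  simp [getD_eq_getElem?_getD, getElem?_set_self h]

end List

namespace TOp

theorem getD_apply_of_not_mem {o : TOp} {w : List Bool} {j : ℕ} (hj : j ∉ o.positions) :
    (o.apply w).getD j false = w.getD j false := by
  cases o with
  | R i =>
    simp only [positions, Finset.mem_singleton] at hj
    exact w.getD_set_of_ne (Ne.symm hj) _ _
  | S i =>
    simp only [positions, Finset.mem_insert, Finset.mem_singleton, not_or] at hj
    simp only [apply, List.getD_set_of_ne _ (Ne.symm hj.1), List.getD_set_of_ne _ (Ne.symm hj.2)]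

theorem getD_apply_of_mem {o : TOp} {w : List Bool} {j : ℕ} (hv : o.valid w)
    (hj : j ∈ o.positions) : (o.apply w).getD j false = !w.getD j false := by
  cases o with
  | R i =>
    simp only [positions, Finset.mem_singleton] at hj
    subst hj
    exact w.getD_set_self hv _ _
  | S i =>
    obtain ⟨hlen, hne⟩ := hv
    simp only [positions, Finset.mem_insert, Finset.mem_singleton] at hj
    rcases hj with rfl | rfl
    · rw [apply, List.getD_set_of_ne _ (by omega), List.getD_set_self _ (by omega)]
      exact Bool.eq_not_of_ne (Ne.symm hne)
    · rw [apply, List.getD_set_self _ (by simpa using hlen)]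
      exact Bool.eq_not_of_ne hne

theorem le_add_one_of_mem_positions {o : TOp} {i j : ℕ} (hi : i ∈ o.positions)
    (hj : j ∈ o.positions) : j ≤ i + 1 := by
  cases o <;> simp only [positions, Finset.mem_insert, Finset.mem_singleton] at hi hj <;> omega

theorem apply_S_append (A B : List Bool) (x y : Bool) :
    (S A.length).apply (A ++ [x, y] ++ B) = A ++ [y, x] ++ B := by
  simp [apply, List.getD_eq_getElem?_getD]

theorem apply_S_block_left (A B : List Bool) (x₀ x₁ x₂ x₃ : Bool) :
    (S A.length).apply (A ++ [x₀, x₁, x₂, x₃] ++ B) = A ++ [x₁, x₀, x₂, x₃] ++ B := by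
  simpa using apply_S_append A ([x₂, x₃] ++ B) x₀ x₁

theorem apply_S_block_right (A B : List Bool) (x₀ x₁ x₂ x₃ : Bool) :
    (S (A.length + 2)).apply (A ++ [x₀, x₁, x₂, x₃] ++ B) = A ++ [x₀, x₁, x₃, x₂] ++ B := by
  simpa using apply_S_append (A ++ [x₀, x₁]) B x₂ x₃

theorem valid_S_append (A B : List Bool) {x y : Bool} (hxy : x ≠ y) :
    (S A.length).valid (A ++ [x, y] ++ B) := by
  simp [valid, List.getD_eq_getElem?_getD, hxy]

end TOp

theorem getD_applySeq_ne_iff {ops : List TOp} {u : List Bool} (hv : validSeq ops u)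
    (ho : eachPosOnce ops) (j : ℕ) :
    (applySeq ops u).getD j false ≠ u.getD j false ↔ ∃ o ∈ ops, j ∈ o.positions := by
  induction ops generalizing u with
  | nil => simp [applySeq]
  | cons o ops ih =>
    obtain ⟨hvo, hvs⟩ := hv
    obtain ⟨hdisj, hos⟩ := List.pairwise_cons.mp ho
    simp only [applySeq]
    by_cases hj : j ∈ o.positions
    · have hkeep : (applySeq ops (o.apply u)).getD j false = (o.apply u).getD j false := by
        by_contra h
        obtain ⟨o', ho', hj'⟩ := (ih hvs hos).mp h
        exact Finset.disjoint_left.mp (hdisj o' ho') hj hj'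
      rw [hkeep, TOp.getD_apply_of_mem hvo hj]
      exact iff_of_true (by cases u.getD j false <;> decide) ⟨o, List.mem_cons_self, hj⟩
    · rw [← TOp.getD_apply_of_not_mem (w := u) hj, ih hvs hos]
      simp [hj]

theorem tdist_le {ops : List TOp} {u v : List Bool} (h : Transforms ops u v) :
    tdist u v ≤ ops.length :=
  Nat.sInf_le (s := {n | ∃ ops : List TOp, ops.length = n ∧ Transforms ops u v}) ⟨ops, rfl, h⟩

theorem exists_transforms_length_eq_tdist {ops : List TOp} {u v : List Bool}
    (h : Transforms ops u v) : ∃ ops', ops'.length = tdist u v ∧ Transforms ops' u v :=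
  Nat.sInf_mem (s := {n | ∃ ops : List TOp, ops.length = n ∧ Transforms ops u v})
    ⟨ops.length, ops, rfl, h⟩

theorem two_le_tdist {ops : List TOp} {u v : List Bool} (h : Transforms ops u v) {i j : ℕ}
    (hi : u.getD i false ≠ v.getD i false) (hj : u.getD j false ≠ v.getD j false)
    (hij : i + 2 ≤ j) : 2 ≤ tdist u v := by
  obtain ⟨ops', hlen, hv, rfl⟩ := exists_transforms_length_eq_tdist h
  by_contra! hshort
  rcases ops' with _ | ⟨o, _ | ⟨o', ops'⟩⟩
  · exact hi rfl
  · have hpos : ∀ k, u.getD k false ≠ (applySeq [o] u).getD k false → k ∈ o.positions := by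
      intro k hk
      simpa using (getD_applySeq_ne_iff hv (List.pairwise_singleton _ o) k).mp (Ne.symm hk)
    have := TOp.le_add_one_of_mem_positions (hpos i hi) (hpos j hj)
    omega
  · simp only [List.length_cons] at hlen
    omega

theorem apply_mem_trajectory (o : TOp) (ops : List TOp) (u : List Bool) :
    o.apply u ∈ trajectory (o :: ops) u := by
  cases ops <;> simp [trajectory]

theorem getD_append_block (A q B : List Bool) {k : ℕ} (hk : k < q.length) :
    (A ++ q ++ B).getD (A.length + k) false = q.getD k false := by
  rw [List.append_assoc, List.getD_append_right _ _ _ _ (by omega), Nat.add_sub_cancel_left,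
    List.getD_append _ _ _ _ hk]

theorem getD_append_block_ne_iff (A B : List Bool) {q q' : List Bool}
    (hq : q.length = q'.length) (j : ℕ) :
    (A ++ q ++ B).getD j false ≠ (A ++ q' ++ B).getD j false ↔
      ∃ k, j = A.length + k ∧ q.getD k false ≠ q'.getD k false := by
  simp only [List.append_assoc]
  rcases lt_or_ge j A.length with hj | hj
  · simp only [List.getD_append _ _ _ _ hj, ne_eq, not_true_eq_false, false_iff, not_exists,
      not_and]
    omega
  obtain ⟨k, rfl⟩ := Nat.exists_eq_add_of_le hj
  simp only [List.getD_append_right _ _ _ _ hj, Nat.add_sub_cancel_left, Nat.add_left_cancel_iff,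
    exists_eq_left']
  rcases lt_or_ge k q.length with hk | hk
  · rw [List.getD_append _ _ _ _ hk, List.getD_append _ _ _ _ (hq ▸ hk)]
  · rw [List.getD_append_right _ _ _ _ hk, List.getD_append_right _ _ _ _ (hq ▸ hk), hq,
      List.getD_eq_default q _ hk, List.getD_eq_default q' _ (hq ▸ hk)]
    simp

theorem exists_getD_of_infix {f m : List Bool} (h : f <:+: m) :
    ∃ t, t + f.length ≤ m.length ∧ ∀ i < f.length, m.getD (t + i) false = f.getD i false := by
  obtain ⟨s, s', rfl⟩ := h
  refine ⟨s.length, by simp, fun i hi => ?_⟩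
  rw [getD_append_block s f s' hi]

theorem not_occurrence_of_center_0101 (g a : ℕ → Bool) {r b n : ℕ} (hn : r + b + 4 ≤ n)
    (ha : ∀ j < n, j ≠ r + b + 2 → j ≠ r + b + 3 → a j = g j)
    (ha' : ∀ j < n, j ≠ b → j ≠ b + 1 → a (r + j) = g j)
    (hg0 : g b = true) (hg2 : g (b + 2) = false) (hG2 : g (r + b + 2) = true)
    (ha0 : a (r + b) = false) {t : ℕ} (ht : t ≤ r) :
    ¬ ∀ i < n, a (t + i) = g i := by
  intro hocc
  rcases ht.eq_or_lt with rfl | ht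
  · simpa [ha0, hg0] using hocc b (by omega)
  have hshift : g (t + b + 2) = false := by
    have := hocc (b + 2) (by omega)
    rwa [← Nat.add_assoc, ha _ (by omega) (by omega) (by omega), hg2] at this
  have := hocc (r + b + 2) (by omega)
  rw [show t + (r + b + 2) = r + (t + b + 2) by omega,
    ha' _ (by omega) (by omega) (by omega), hshift, hG2] at this
  contradiction

theorem not_occurrence_of_center_1010 (g a : ℕ → Bool) {r b n : ℕ} (hn : r + b + 4 ≤ n)
    (ha : ∀ j < n, j ≠ r + b → j ≠ r + b + 1 → a j = g j)
    (ha' : ∀ j < n, j ≠ b + 2 → j ≠ b + 3 → a (r + j) = g j)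
    (hg0 : g b = true) (hg1 : g (b + 1) = false) (hg2 : g (b + 2) = false)
    (hg3 : g (b + 3) = true) (hG0 : g (r + b) = false) (hG1 : g (r + b + 1) = true)
    (hG3 : g (r + b + 3) = false) (ha0 : a (r + b) = true) (ha2 : a (r + b + 2) = true)
    {t : ℕ} (ht : t ≤ r) :
    ¬ ∀ i < n, a (t + i) = g i := by
  intro hocc
  have shift_t : ∀ i j, j = t + i → i < n → j < n → j ≠ r + b → j ≠ r + b + 1 →
      g j = g i := by
    rintro i j rfl hi hj h0 h1
    rw [← ha _ hj h0 h1, hocc i hi]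
  have shift_r : ∀ i j, j = t + i → r + i < n → j ≠ r + b → j ≠ r + b + 1 → j ≠ b + 2 →
      j ≠ b + 3 → g (r + i) = g i := by
    rintro i j rfl hi h0 h1 h2 h3
    rw [← shift_t i _ rfl (by omega) (by omega) h0 h1, ← ha' _ (by omega) h2 h3, ← hocc _ hi,
      Nat.add_left_comm]
  rcases ht.eq_or_lt with rfl | htr
  · simpa [← Nat.add_assoc, ha2, hg2] using hocc (b + 2) (by omega)
  obtain rfl | ht0 := Nat.eq_zero_or_pos t
  · simpa [ha0, hG0] using hocc (r + b) (by omega)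
  obtain rfl | rfl | rfl | ht4 : t = 1 ∨ t = 2 ∨ t = 3 ∨ 4 ≤ t := by omega
  · simpa [hg1, hg0] using shift_t b (b + 1) (by omega) (by omega) (by omega) (by omega) (by omega)
  · simpa [hg2, hg0] using shift_t b (b + 2) (by omega) (by omega) (by omega) (by omega) (by omega)
  · rcases eq_or_ne r 4 with rfl | hr4
    · simpa [← Nat.add_assoc, hG3, hg3] using
        shift_r (b + 3) (b + 6) (by omega) (by omega) (by omega) (by omega) (by omega) (by omega)
    · simpa [← Nat.add_assoc, hG1, hg1] using
        shift_r (b + 1) (b + 4) (by omega) (by omega) (by omega) (by omega) (by omega) (by omega)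
  · simpa [hG0, hg0] using
      shift_r b (t + b) rfl (by omega) (by omega) (by omega) (by omega) (by omega)

theorem transforms_swap_swap (A B : List Bool) {x₀ x₁ x₂ x₃ : Bool} (h₀₁ : x₀ ≠ x₁)
    (h₂₃ : x₂ ≠ x₃) :
    Transforms [.S A.length, .S (A.length + 2)] (A ++ [x₀, x₁, x₂, x₃] ++ B)
      (A ++ [x₁, x₀, x₃, x₂] ++ B) := by
  refine ⟨⟨by simpa using TOp.valid_S_append A ([x₂, x₃] ++ B) h₀₁, ?_, trivial⟩, ?_⟩
  · rw [TOp.apply_S_block_left]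
    simpa using TOp.valid_S_append (A ++ [x₁, x₀]) B h₂₃
  · simp only [applySeq, TOp.apply_S_block_left, TOp.apply_S_block_right]

theorem head_eq_S_of_transforms {o o' : TOp} {u v : List Bool} (hT : Transforms [o, o'] u v)
    (ho : eachPosOnce [o, o']) {L : ℕ}
    (hdiff : ∀ j, u.getD j false ≠ v.getD j false ↔ L ≤ j ∧ j < L + 4) :
    o = .S L ∨ o = .S (L + 2) := by
  obtain ⟨hv, rfl⟩ := hT
  have hcov : ∀ j, j ∈ o.positions ∨ j ∈ o'.positions ↔ L ≤ j ∧ j < L + 4 := by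
    intro j
    rw [← hdiff, ne_comm, getD_applySeq_ne_iff hv ho]
    simp
  rcases o with i | i <;> rcases o' with i' | i' <;>
    simp only [TOp.positions, Finset.mem_insert, Finset.mem_singleton, TOp.S.injEq,
      reduceCtorEq, false_or] at hcov ⊢
  -- a flip covers one position and a swap two adjacent ones, so only the swaps at `L` and
  -- `L + 2` can together cover `[L, L + 4)`
  all_goals
    have := hcov L; have := hcov (L + 1); have := hcov (L + 2); have := hcov (L + 3)
    have := hcov i; have := hcov (i + 1); have := hcov i'; have := hcov (i' + 1)
    omega

section SSOverlap

variable {f w1 w2 w3 w4 : List Bool}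

theorem append_block_assoc (q : List Bool) :
    w1 ++ w2 ++ q ++ w3 ++ w4 = (w1 ++ w2) ++ q ++ (w3 ++ w4) := by
  simp

theorem getD_center (q : List Bool) {k : ℕ} (hk : k < q.length) :
    (w1 ++ w2 ++ q ++ w3 ++ w4).getD (w1.length + w2.length + k) false = q.getD k false := by
  rw [append_block_assoc, ← getD_append_block _ q _ hk, List.length_append]

theorem append_eq_center_1001 (h1 : f = w2 ++ [true, false, false, true] ++ w3 ++ w4) :
    w1 ++ f = (w1 ++ w2) ++ [true, false, false, true] ++ (w3 ++ w4) := by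
  simp [h1]

theorem append_eq_center_0110 (h2 : f = w1 ++ w2 ++ [false, true, true, false] ++ w3) :
    f ++ w4 = (w1 ++ w2) ++ [false, true, true, false] ++ (w3 ++ w4) := by
  simp [h2]

theorem getD_center_eq_getD_of_agree_0110 (h2 : f = w1 ++ w2 ++ [false, true, true, false] ++ w3)
    {q : List Bool} (hq : q.length = 4) {j : ℕ} (hj : j < f.length)
    (hk : ∀ k, j = w1.length + w2.length + k →
      q.getD k false = [false, true, true, false].getD k false) :
    (w1 ++ w2 ++ q ++ w3 ++ w4).getD j false = f.getD j false := by
  rw [append_block_assoc, ← List.getD_append f w4 _ _ hj, append_eq_center_0110 h2]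
  by_contra hne
  obtain ⟨k, rfl, hk'⟩ := (getD_append_block_ne_iff _ _ (by simp [hq]) j).mp hne
  exact hk' (hk k (by simp))

theorem getD_center_eq_getD_of_agree_1001 (h1 : f = w2 ++ [true, false, false, true] ++ w3 ++ w4)
    {q : List Bool} (hq : q.length = 4) {j : ℕ}
    (hk : ∀ k, j = w2.length + k → q.getD k false = [true, false, false, true].getD k false) :
    (w1 ++ w2 ++ q ++ w3 ++ w4).getD (w1.length + j) false = f.getD j false := by
  have hshift : (w1 ++ f).getD (w1.length + j) false = f.getD j false := by
    rw [List.getD_append_right _ _ _ _ (Nat.le_add_right _ _), Nat.add_sub_cancel_left]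
  rw [← hshift, append_eq_center_1001 h1, append_block_assoc]
  by_contra hne
  obtain ⟨k, hjk, hk'⟩ := (getD_append_block_ne_iff _ _ (by simp [hq]) _).mp hne
  exact hk' (hk k (by simp at hjk; omega))

theorem getD_eq_center_1001 (h1 : f = w2 ++ [true, false, false, true] ++ w3 ++ w4) {k : ℕ}
    (hk : k < 4) : f.getD (w2.length + k) false = [true, false, false, true].getD k false := by
  rw [h1, List.append_assoc _ w3]
  exact getD_append_block _ _ _ hk

theorem getD_eq_center_0110 (h2 : f = w1 ++ w2 ++ [false, true, true, false] ++ w3) {k : ℕ}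
    (hk : k < 4) :
    f.getD (w1.length + w2.length + k) false = [false, true, true, false].getD k false := by
  rw [h2, ← List.length_append]
  exact getD_append_block _ _ _ hk

theorem length_right_eq_length_left (h1 : f = w2 ++ [true, false, false, true] ++ w3 ++ w4)
    (h2 : f = w1 ++ w2 ++ [false, true, true, false] ++ w3) : w4.length = w1.length := by
  have := congrArg List.length (h1.symm.trans h2)
  simp only [List.length_append, List.length_cons, List.length_nil] at this
  omega

theorem fFree_center_0101 (h1 : f = w2 ++ [true, false, false, true] ++ w3 ++ w4)
    (h2 : f = w1 ++ w2 ++ [false, true, true, false] ++ w3) :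
    FFree f (w1 ++ w2 ++ [false, true, false, true] ++ w3 ++ w4) := by
  intro hf
  obtain ⟨t, ht, hocc⟩ := exists_getD_of_infix hf
  have hn : f.length = w1.length + w2.length + 4 + w3.length := by simp [h2]; omega
  have hw4 := length_right_eq_length_left h1 h2
  simp only [List.length_append, List.length_cons, List.length_nil] at ht
  have hg0 : f.getD w2.length false = true := getD_eq_center_1001 h1 (k := 0) (by omega)
  have ha0 : (w1 ++ w2 ++ [false, true, false, true] ++ w3 ++ w4).getD
      (w1.length + w2.length) false = false := getD_center _ (k := 0) (by simp)
  refine not_occurrence_of_center_0101 (f.getD · false)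
    ((w1 ++ w2 ++ [false, true, false, true] ++ w3 ++ w4).getD · false)
    (r := w1.length) (b := w2.length) (n := f.length) (by omega) ?_ ?_ hg0
    (getD_eq_center_1001 h1 (k := 2) (by omega)) (getD_eq_center_0110 h2 (k := 2) (by omega))
    ha0 (by omega) hocc
  · intro j hj hj2 hj3
    exact getD_center_eq_getD_of_agree_0110 h2 rfl hj (by
      rintro k rfl
      rcases k with _ | _ | _ | _ | _ <;> first | rfl | omega)
  · intro j _ hj0 hj1
    exact getD_center_eq_getD_of_agree_1001 h1 rfl (by
      rintro k rfl
      rcases k with _ | _ | _ | _ | _ <;> first | rfl | omega)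

theorem fFree_center_1010 (h1 : f = w2 ++ [true, false, false, true] ++ w3 ++ w4)
    (h2 : f = w1 ++ w2 ++ [false, true, true, false] ++ w3) :
    FFree f (w1 ++ w2 ++ [true, false, true, false] ++ w3 ++ w4) := by
  intro hf
  obtain ⟨t, ht, hocc⟩ := exists_getD_of_infix hf
  have hn : f.length = w1.length + w2.length + 4 + w3.length := by simp [h2]; omega
  have hw4 := length_right_eq_length_left h1 h2
  simp only [List.length_append, List.length_cons, List.length_nil] at ht
  have hg0 : f.getD w2.length false = true := getD_eq_center_1001 h1 (k := 0) (by omega)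
  have hG0 : f.getD (w1.length + w2.length) false = false :=
    getD_eq_center_0110 h2 (k := 0) (by omega)
  have ha0 : (w1 ++ w2 ++ [true, false, true, false] ++ w3 ++ w4).getD
      (w1.length + w2.length) false = true := getD_center _ (k := 0) (by simp)
  refine not_occurrence_of_center_1010 (f.getD · false)
    ((w1 ++ w2 ++ [true, false, true, false] ++ w3 ++ w4).getD · false)
    (r := w1.length) (b := w2.length) (n := f.length) (by omega) ?_ ?_ hg0
    (getD_eq_center_1001 h1 (k := 1) (by omega)) (getD_eq_center_1001 h1 (k := 2) (by omega))
    (getD_eq_center_1001 h1 (k := 3) (by omega)) hG0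
    (getD_eq_center_0110 h2 (k := 1) (by omega)) (getD_eq_center_0110 h2 (k := 3) (by omega))
    ha0 (getD_center _ (k := 2) (by simp)) (by omega) hocc
  · intro j hj hj0 hj1
    exact getD_center_eq_getD_of_agree_0110 h2 rfl hj (by
      rintro k rfl
      rcases k with _ | _ | _ | _ | _ <;> first | rfl | omega)
  · intro j _ hj2 hj3
    exact getD_center_eq_getD_of_agree_1001 h1 rfl (by
      rintro k rfl
      rcases k with _ | _ | _ | _ | _ <;> first | rfl | omega)

theorem getD_center_0101_ne_center_1010_iff (j : ℕ) :
    (w1 ++ w2 ++ [false, true, false, true] ++ w3 ++ w4).getD j false ≠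
        (w1 ++ w2 ++ [true, false, true, false] ++ w3 ++ w4).getD j false ↔
      w1.length + w2.length ≤ j ∧ j < w1.length + w2.length + 4 := by
  rw [append_block_assoc, append_block_assoc,
    getD_append_block_ne_iff _ _ (q := [false, true, false, true])
      (q' := [true, false, true, false]) rfl, List.length_append]
  constructor
  · rintro ⟨k, rfl, hk⟩
    rcases k with _ | _ | _ | _ | k
    all_goals first | omega | exact absurd rfl hk
  · rintro ⟨hL, hj⟩
    obtain ⟨k, rfl⟩ := Nat.exists_eq_add_of_le hL
    have hk : k < 4 := by omega
    exact ⟨k, rfl, by interval_cases k <;> decide⟩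

theorem transforms_center_0101_center_1010 :
    Transforms [.S (w1.length + w2.length), .S (w1.length + w2.length + 2)]
      (w1 ++ w2 ++ [false, true, false, true] ++ w3 ++ w4)
      (w1 ++ w2 ++ [true, false, true, false] ++ w3 ++ w4) := by
  rw [append_block_assoc, append_block_assoc, ← List.length_append]
  exact transforms_swap_swap _ _ (by decide) (by decide)

theorem tdist_center_0101_center_1010 :
    tdist (w1 ++ w2 ++ [false, true, false, true] ++ w3 ++ w4)
      (w1 ++ w2 ++ [true, false, true, false] ++ w3 ++ w4) = 2 :=
  le_antisymm (tdist_le transforms_center_0101_center_1010)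
    (two_le_tdist transforms_center_0101_center_1010
      ((getD_center_0101_ne_center_1010_iff (w1.length + w2.length)).mpr (by omega))
      ((getD_center_0101_ne_center_1010_iff (w1.length + w2.length + 3)).mpr (by omega))
      (by omega))

theorem not_freeTransf_center_0101_center_1010
    (h1 : f = w2 ++ [true, false, false, true] ++ w3 ++ w4)
    (h2 : f = w1 ++ w2 ++ [false, true, true, false] ++ w3) (ops : List TOp)
    (hmin : MinimalTransf ops (w1 ++ w2 ++ [false, true, false, true] ++ w3 ++ w4)
      (w1 ++ w2 ++ [true, false, true, false] ++ w3 ++ w4)) :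
    ¬ FreeTransf f ops (w1 ++ w2 ++ [false, true, false, true] ++ w3 ++ w4) := by
  obtain ⟨hT, hlen, honce⟩ := hmin
  rw [tdist_center_0101_center_1010] at hlen
  obtain ⟨o, o', rfl⟩ := List.length_eq_two.mp hlen
  intro hfree
  refine hfree _ (apply_mem_trajectory o [o'] _) ?_
  rw [append_block_assoc]
  rcases head_eq_S_of_transforms hT honce getD_center_0101_ne_center_1010_iff with rfl | rfl
  · rw [← List.length_append, TOp.apply_S_block_left, ← append_eq_center_1001 h1]
    exact (List.suffix_append w1 f).isInfix
  · rw [← List.length_append, TOp.apply_S_block_right, ← append_eq_center_0110 h2]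
    exact (List.prefix_append f w4).isInfix

end SSOverlap

theorem stmt19 (f w1 w2 w3 w4 : List Bool)
    (h1 : f = w2 ++ [true, false, false, true] ++ w3 ++ w4)
    (h2 : f = w1 ++ w2 ++ [false, true, true, false] ++ w3) :
    FFree f (w1 ++ w2 ++ [false, true, false, true] ++ w3 ++ w4) ∧
    FFree f (w1 ++ w2 ++ [true, false, true, false] ++ w3 ++ w4) ∧
    tdist (w1 ++ w2 ++ [false, true, false, true] ++ w3 ++ w4)
          (w1 ++ w2 ++ [true, false, true, false] ++ w3 ++ w4) = 2 ∧
    (∀ ops : List TOp,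
        MinimalTransf ops (w1 ++ w2 ++ [false, true, false, true] ++ w3 ++ w4)
          (w1 ++ w2 ++ [true, false, true, false] ++ w3 ++ w4) →
        ¬ FreeTransf f ops (w1 ++ w2 ++ [false, true, false, true] ++ w3 ++ w4)) ∧
    Witnesses f (w1 ++ w2 ++ [false, true, false, true] ++ w3 ++ w4)
                (w1 ++ w2 ++ [true, false, true, false] ++ w3 ++ w4) := by
  have hα := fFree_center_0101 h1 h2
  have hβ := fFree_center_1010 h1 h2
  have hmin := not_freeTransf_center_0101_center_1010 h1 h2
  exact ⟨hα, hβ, tdist_center_0101_center_1010, hmin, by simp, hα, hβ,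
    tdist_center_0101_center_1010.ge, hmin⟩
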